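/- (Constant effect variance formula.) Suppose Y(1) = Y(0) + c for a constant c ∈ ℝ, Z is binary with p = Pr(Z=1) ∈ (0,1), and Y = Z·Y(1)+(1−Z)·Y(0). Let σ_t² = Var(Y|Z=1), σ_c² = Var(Y|Z=0), σ₀² = Var(Y(0)), β = E[Y|Z=1] − E[Y|Z=0]. Then (β − c)² = σ₀²/(p(1−p)) − σ_t²/(1−p) − σ_c²/p. -/

import Mathlib

open MeasureTheory ProbabilityTheory

lemma cond_integral_eq {Ω : Type*} [MeasurableSpace Ω] (μ : Measure Ω) (s : Set Ω)
    (f : Ω → ℝ) :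
    ∫ x, f x ∂(μ[|s]) = ((μ s).toReal)⁻¹ * ∫ x in s, f x ∂μ := by
  rw [ProbabilityTheory.cond, integral_smul_measure, ENNReal.toReal_inv, smul_eq_mul]

lemma cond_memℒp {Ω : Type*} [MeasurableSpace Ω] {μ : Measure Ω} {s : Set Ω}
    {f : Ω → ℝ} (hf : MemLp f 2 μ) (hs : μ s ≠ 0) : MemLp f 2 (μ[|s]) := by
  rw [ProbabilityTheory.cond]
  exact (hf.restrict s).smul_measure (by simp [hs])

lemma cond_ae_mem {Ω : Type*} [MeasurableSpace Ω] {μ : Measure Ω} {s : Set Ω}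
    (hs : MeasurableSet s) : ∀ᵐ ω ∂(μ[|s]), ω ∈ s := by
  rw [ProbabilityTheory.cond]
  exact Measure.ae_smul_measure (ae_restrict_mem hs) _

/-- Constant treatment effect variance formula (Remark 4):
`(β − c)² = σ₀²/(p(1−p)) − σ_t²/(1−p) − σ_c²/p`. -/
theorem constant_effect_variance_formula
    {Ω : Type*} [MeasurableSpace Ω] (μ : Measure Ω) [IsProbabilityMeasure μ]
    (Y0 Y1 Z : Ω → ℝ) (hY0 : MemLp Y0 2 μ)
    (c : ℝ) (hc : Y1 = fun ω => Y0 ω + c)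
    (hZ : Measurable Z) (hZbin : ∀ ω, Z ω = 0 ∨ Z ω = 1)
    (p : ℝ) (hp : p = (μ (Z ⁻¹' {1})).toReal) (hp0 : 0 < p) (hp1 : p < 1)
    (Y : Ω → ℝ) (hY : Y = fun ω => Z ω * Y1 ω + (1 - Z ω) * Y0 ω)
    (σt2 σc2 σ02 β : ℝ)
    (hσt2 : σt2 = variance Y (μ[|Z ⁻¹' {1}]))
    (hσc2 : σc2 = variance Y (μ[|Z ⁻¹' {0}]))
    (hσ02 : σ02 = variance Y0 μ)
    (hβ : β = (∫ ω, Y ω ∂(μ[|Z ⁻¹' {1}])) - (∫ ω, Y ω ∂(μ[|Z ⁻¹' {0}]))) :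
    (β - c) ^ 2 = σ02 / (p * (1 - p)) - σt2 / (1 - p) - σc2 / p := by
  set A : Set Ω := Z ⁻¹' {1} with hA_def
  set B : Set Ω := Z ⁻¹' {0} with hB_def
  have hA : MeasurableSet A := hZ (measurableSet_singleton 1)
  have hBA : B = Aᶜ := by
    ext ω
    rcases hZbin ω with h | h <;> simp [hA_def, hB_def, h]
  have hμA_top : μ A ≠ ⊤ := measure_ne_top μ A
  have hμA_ne0 : μ A ≠ 0 := by
    intro h; rw [hp, h] at hp0; simp at hp0
  have hq : (μ B).toReal = 1 - p := by
    have h1 : μ A + μ Aᶜ = 1 := by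
      rw [measure_add_measure_compl hA, measure_univ]
    have h2 : (μ A).toReal + (μ Aᶜ).toReal = 1 := by
      rw [← ENNReal.toReal_add hμA_top (measure_ne_top μ _), h1, ENNReal.toReal_one]
    rw [hBA]
    rw [hp] at *
    linarith
  have hμB_ne0 : μ B ≠ 0 := by
    intro h
    rw [h] at hq
    simp at hq
    linarith
  haveI hP1 : IsProbabilityMeasure (μ[|A]) := cond_isProbabilityMeasure hμA_ne0
  haveI hP0 : IsProbabilityMeasure (μ[|B]) := cond_isProbabilityMeasure hμB_ne0
  -- a.e. behavior of Y on each conditional measure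
  have hY1ae : Y =ᵐ[μ[|A]] fun ω => Y0 ω + c := by
    filter_upwards [cond_ae_mem (μ := μ) hA] with ω hω
    have hz : Z ω = 1 := hω
    simp [hY, hc, hz]
  have hY0ae : Y =ᵐ[μ[|B]] Y0 := by
    filter_upwards [cond_ae_mem (μ := μ) (hBA ▸ hA.compl : MeasurableSet B)] with ω hω
    have hz : Z ω = 0 := hω
    simp [hY, hc, hz]
  -- Memℒp facts
  have hM1 : MemLp Y0 2 (μ[|A]) := cond_memℒp hY0 hμA_ne0
  have hM0 : MemLp Y0 2 (μ[|B]) := cond_memℒp hY0 hμB_ne0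
  have hMY1 : MemLp Y 2 (μ[|A]) :=
    ((hM1.add (memLp_const c)).ae_eq hY1ae.symm)
  have hMY0 : MemLp Y 2 (μ[|B]) := hM0.ae_eq hY0ae.symm
  -- moments
  set E1 : ℝ := ∫ ω, Y0 ω ∂(μ[|A]) with hE1
  set E0 : ℝ := ∫ ω, Y0 ω ∂(μ[|B]) with hE0
  set Q1 : ℝ := ∫ ω, Y0 ω ^ 2 ∂(μ[|A]) with hQ1
  set Q0 : ℝ := ∫ ω, Y0 ω ^ 2 ∂(μ[|B]) with hQ0
  -- splitting the total integrals
  have hsplit : ∀ f : Ω → ℝ, Integrable f μ →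
      ∫ ω, f ω ∂μ = p * (∫ ω, f ω ∂(μ[|A])) + (1 - p) * (∫ ω, f ω ∂(μ[|B])) := by
    intro f hf
    have h1 : ∫ ω, f ω ∂(μ[|A]) = ((μ A).toReal)⁻¹ * ∫ x in A, f x ∂μ :=
      cond_integral_eq μ A f
    have h2 : ∫ ω, f ω ∂(μ[|B]) = ((μ B).toReal)⁻¹ * ∫ x in B, f x ∂μ :=
      cond_integral_eq μ B f
    have h3 : (∫ x in A, f x ∂μ) + ∫ x in Aᶜ, f x ∂μ = ∫ x, f x ∂μ :=
      integral_add_compl hA hf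
    rw [h1, h2, hBA]
    have hpne : p ≠ 0 := ne_of_gt hp0
    have hqne : (1 : ℝ) - p ≠ 0 := by linarith
    rw [hBA] at hq
    rw [← hp, hq]
    field_simp
    linarith [h3]
  have hEμ : ∫ ω, Y0 ω ∂μ = p * E1 + (1 - p) * E0 :=
    hsplit Y0 (hY0.integrable one_le_two)
  have hQμ : ∫ ω, Y0 ω ^ 2 ∂μ = p * Q1 + (1 - p) * Q0 :=
    hsplit (fun ω => Y0 ω ^ 2) hY0.integrable_sq
  -- variance computations
  have hvar0 : σ02 = (p * Q1 + (1 - p) * Q0) - (p * E1 + (1 - p) * E0) ^ 2 := by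
    rw [hσ02, variance_eq_sub hY0, ← hEμ, ← hQμ]
    congr 1
  have hIY1 : ∫ ω, Y ω ∂(μ[|A]) = E1 + c := by
    rw [integral_congr_ae hY1ae, integral_add (hM1.integrable one_le_two) (integrable_const c),
      integral_const, probReal_univ]
    simp [hE1]
  have hIY0 : ∫ ω, Y ω ∂(μ[|B]) = E0 := integral_congr_ae hY0ae
  have hIYsq1 : ∫ ω, Y ω ^ 2 ∂(μ[|A]) = Q1 + 2 * c * E1 + c ^ 2 := by
    have hae : (fun ω => Y ω ^ 2) =ᵐ[μ[|A]]
        fun ω => Y0 ω ^ 2 + (2 * c) * Y0 ω + c ^ 2 := by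
      filter_upwards [hY1ae] with ω hω
      rw [hω]; ring
    have hi2 : Integrable (fun ω => 2 * c * Y0 ω) (μ[|A]) :=
      (hM1.integrable one_le_two).const_mul (2 * c)
    have hi1 : Integrable (fun ω => Y0 ω ^ 2 + 2 * c * Y0 ω) (μ[|A]) :=
      hM1.integrable_sq.add hi2
    rw [integral_congr_ae hae, integral_add hi1 (integrable_const _),
      integral_add hM1.integrable_sq hi2, integral_const, probReal_univ]
    simp [integral_const_mul, hQ1, hE1]
  have hIYsq0 : ∫ ω, Y ω ^ 2 ∂(μ[|B]) = Q0 := by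
    refine integral_congr_ae ?_
    filter_upwards [hY0ae] with ω hω
    rw [hω]
  have hvart : σt2 = (Q1 + 2 * c * E1 + c ^ 2) - (E1 + c) ^ 2 := by
    rw [hσt2, variance_eq_sub hMY1, ← hIY1, ← hIYsq1]
    congr 1
  have hvarc : σc2 = Q0 - E0 ^ 2 := by
    rw [hσc2, variance_eq_sub hMY0, ← hIY0, ← hIYsq0]
    congr 1
  have hβ' : β = (E1 + c) - E0 := by rw [hβ, hIY1, hIY0]
  have hpne : p ≠ 0 := ne_of_gt hp0
  have hqne : (1 : ℝ) - p ≠ 0 := by linarith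
  rw [hβ', hvar0, hvart, hvarc]
  field_simp
  ring
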